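/- There do not exist positive integers k and odd r ≥ 1 with r² (10k+1) = 2k(17k+2). (In particular, if r is odd and rs = 2k with r(10k+1) = s(17k+2), multiplying by r gives r²(10k+1) = 2k(17k+2), and then 2k+1 ≡ 2k² (mod 4), which is impossible.) -/
import Mathlib


theorem paper_stmt :
    ¬ ∃ (k r : ℤ), 1 ≤ k ∧ 1 ≤ r ∧ Odd r ∧ r^2 * (10*k + 1) = 2*k*(17*k + 2) := by
  rintro ⟨k, r, hk, hr, ⟨m, hm⟩, heq⟩
  have h4 : ((r : ZMod 4))^2 * (10*(k:ZMod 4) + 1) = 2*(k:ZMod 4)*(17*(k:ZMod 4) + 2) := by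
    have := congrArg (Int.cast : ℤ → ZMod 4) heq
    push_cast at this
    linear_combination this
  have hrm : (r : ZMod 4) = 2*(m:ZMod 4) + 1 := by
    have := congrArg (Int.cast : ℤ → ZMod 4) hm
    push_cast at this
    linear_combination this
  rw [hrm] at h4
  revert h4
  generalize (m : ZMod 4) = a
  generalize (k : ZMod 4) = b
  revert a b
  decide
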